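/- Let s ≥ 2, let n_1, …, n_s be positive integers, let z_1, …, z_s be complex numbers, and let m be a positive integer with 2 ≤ m ≤ ∑_{i=1}^s n_i. Then ∑ C(n_1,k_1)·C(n_2,k_2)···C(n_s,k_s)·|k_1 z_1 + k_2 z_2 + ⋯ + k_s z_s|² = C(∑_{i=1}^s n_i − 2, m−1)·∑_{i=1}^s n_i |z_i|² + C(∑_{i=1}^s n_i − 2, m−2)·|∑_{i=1}^s n_i z_i|², where the sum ranges over all s-tuples (k_1, …, k_s) of nonnegative integers with k_i ≤ n_i for each i and ∑_{i=1}^s k_i = m. -/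

import Mathlib

open Finset

lemma piFinset_sum_cons {s : ℕ} {M : Type*} [AddCommMonoid M]
    (S : ∀ _ : Fin (s+1), Finset ℕ) (g : (Fin (s+1) → ℕ) → M) :
    ∑ r ∈ Fintype.piFinset S, g r =
      ∑ a ∈ S 0, ∑ t ∈ Fintype.piFinset (Fin.tail S), g (Fin.cons a t) := by
  rw [← Finset.sum_product']
  apply Finset.sum_nbij' (fun r => (r 0, Fin.tail r)) (fun p => Fin.cons p.1 p.2)
  · intro r hr
    simp only [Finset.mem_product]
    rw [Fin.mem_piFinset_iff_zero_tail] at hr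
    exact hr
  · intro p hp
    simp only [Finset.mem_product] at hp
    rw [Fin.mem_piFinset_iff_zero_tail]
    simpa [Fin.tail_cons] using hp
  · intro r _; exact Fin.cons_self_tail r
  · intro p _; simp
  · intro r _; rw [Fin.cons_self_tail]

lemma vand : ∀ (s : ℕ) (n : Fin s → ℕ) (m : ℕ),
    ∑ k ∈ (Fintype.piFinset fun i => Finset.range (n i + 1)).filter
        (fun k => ∑ i, k i = m), ∏ i, (n i).choose (k i) = (∑ i, n i).choose m := by
  intro s
  induction s with
  | zero =>
    intro n m
    simp only [Finset.sum_filter, Finset.sum_const, Finset.prod_empty]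
    rcases Nat.eq_zero_or_pos m with h | h
    · subst h; simp
    · simp [Finset.sum_eq_zero_iff, Nat.choose_eq_zero_of_lt h, (Nat.ne_of_gt h).symm,
        Fin.sum_univ_zero]
  | succ s ih =>
    intro n m
    rw [Finset.sum_filter, piFinset_sum_cons]
    have htail : Fin.tail (fun i : Fin (s+1) => Finset.range (n i + 1)) =
        fun i : Fin s => Finset.range (Fin.tail n i + 1) := rfl
    rw [htail]
    have inner : ∀ a, (∑ t ∈ Fintype.piFinset (fun i : Fin s => Finset.range (Fin.tail n i + 1)),
        if ∑ i, (Fin.cons a t : Fin (s+1) → ℕ) i = m then ∏ i, (n i).choose ((Fin.cons a t : Fin (s+1) → ℕ) i) else 0)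
        = if a ≤ m then (n 0).choose a * (∑ i, Fin.tail n i).choose (m - a) else 0 := by
      intro a
      simp only [Fin.sum_cons, Fin.prod_univ_succ, Fin.cons_zero, Fin.cons_succ]
      by_cases ha : a ≤ m
      · rw [if_pos ha, ← ih (Fin.tail n) (m - a), Finset.sum_filter, Finset.mul_sum]
        apply Finset.sum_congr rfl
        intro t _
        by_cases h : ∑ i : Fin s, t i = m - a
        · rw [if_pos (by omega), if_pos h]; rfl
        · rw [if_neg (by omega), if_neg h, mul_zero]
      · rw [if_neg ha]
        apply Finset.sum_eq_zero
        intro t _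
        rw [if_neg (by omega)]
    simp only [inner]
    -- now: ∑ a ∈ range (n 0 + 1), (if a ≤ m then C(n0,a)*C(N',m-a) else 0) = C(Σn, m)
    have hN : ∑ i, n i = n 0 + ∑ i, Fin.tail n i := by
      rw [Fin.sum_univ_succ]; rfl
    rw [hN, Nat.add_choose_eq, Finset.Nat.sum_antidiagonal_eq_sum_range_succ_mk]
    set N' := ∑ i, Fin.tail n i with hN'
    have h1 : ∑ a ∈ Finset.range (m + 1), (n 0).choose a * N'.choose (m - a)
        = ∑ a ∈ Finset.range (m + 1), (if a ≤ m then (n 0).choose a * N'.choose (m - a) else 0) := by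
      apply Finset.sum_congr rfl
      intro a ha
      rw [if_pos (by simp at ha; omega)]
    rw [h1]
    have big := Nat.le_max_left (n 0 + 1) (m + 1)
    have big2 := Nat.le_max_right (n 0 + 1) (m + 1)
    rw [Finset.sum_subset (Finset.range_subset_range.2 big) (by
      intro a _ ha
      simp only [Finset.mem_range, not_lt] at ha
      by_cases h : a ≤ m
      · rw [if_pos h, Nat.choose_eq_zero_of_lt (by omega), zero_mul]
      · rw [if_neg h] ), Finset.sum_subset (Finset.range_subset_range.2 big2) (by
      intro a _ ha
      simp only [Finset.mem_range, not_lt] at ha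
      by_cases h : a ≤ m
      · rw [if_pos h, Nat.choose_eq_zero_of_lt (by omega), zero_mul]
      · rw [if_neg h])]

lemma sum_sub_fin {s : ℕ} (f g : Fin s → ℕ) (h : ∀ i, g i ≤ f i) :
    ∑ i, (f i - g i) = ∑ i, f i - ∑ i, g i := by
  have h2 : ∑ i, (f i - g i) + ∑ i, g i = ∑ i, f i := by
    rw [← Finset.sum_add_distrib]
    exact Finset.sum_congr rfl fun i _ => by have := h i; omega
  omega

lemma choose_shift {n a c : ℕ} (hc : c ≤ n) :
    n.choose (a + c) * (a + c).choose c = n.choose c * (n - c).choose a := by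
  by_cases h : a + c ≤ n
  · rw [Nat.choose_mul (Nat.le_add_left c a), Nat.add_sub_cancel]
  · rw [Nat.choose_eq_zero_of_lt (show n < a + c by omega), zero_mul,
      Nat.choose_eq_zero_of_lt (show n - c < a by omega), mul_zero]

lemma master_step2 (s : ℕ) (n c : Fin s → ℕ) (hc : ∀ i, c i ≤ n i) (m : ℕ) (hcm : ∑ i, c i ≤ m) :
    ∑ k ∈ ((Fintype.piFinset fun i => Finset.range (n i + 1)).filter
        (fun k => ∑ i, k i = m)).filter (fun k => ∀ i, c i ≤ k i),
        (∏ i, (n i).choose (k i)) * ∏ i, (k i).choose (c i)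
      = ∑ k' ∈ (Fintype.piFinset fun i => Finset.range (n i - c i + 1)).filter
          (fun k' => ∑ i, k' i = m - ∑ i, c i),
        ∏ i, ((n i).choose (c i) * (n i - c i).choose (k' i)) := by
  classical
  refine Finset.sum_nbij' (fun k => fun j => k j - c j) (fun k' => fun j => k' j + c j) ?_ ?_ ?_ ?_ ?_
  · intro k hk
    simp only [Finset.mem_filter, Fintype.mem_piFinset, Finset.mem_range] at hk ⊢
    obtain ⟨⟨h1, h2⟩, h3⟩ := hk
    refine ⟨?_, ?_⟩
    · intro i; have := h1 i; have := h3 i; omega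
    · rw [sum_sub_fin _ _ h3, h2]
  · intro k' hk'
    simp only [Finset.mem_filter, Fintype.mem_piFinset, Finset.mem_range] at hk' ⊢
    obtain ⟨h1, h2⟩ := hk'
    refine ⟨⟨?_, ?_⟩, ?_⟩
    · intro i; have := h1 i; have := hc i; omega
    · rw [Finset.sum_add_distrib, h2]; omega
    · intro i; omega
  · intro k hk
    simp only [Finset.mem_filter, Fintype.mem_piFinset, Finset.mem_range] at hk
    funext i
    have := hk.2 i
    dsimp only
    omega
  · intro k' _
    funext i
    dsimp only
    omega
  · intro k hk
    simp only [Finset.mem_filter, Fintype.mem_piFinset, Finset.mem_range] at hk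
    rw [← Finset.prod_mul_distrib]
    apply Finset.prod_congr rfl
    intro i _
    have h1 : k i - c i + c i = k i := by have := hk.2 i; omega
    rw [← choose_shift (hc i), h1]

lemma master (s : ℕ) (n c : Fin s → ℕ) (hc : ∀ i, c i ≤ n i) (m : ℕ) (hcm : ∑ i, c i ≤ m) :
    ∑ k ∈ (Fintype.piFinset fun i => Finset.range (n i + 1)).filter (fun k => ∑ i, k i = m),
      (∏ i, (n i).choose (k i)) * ∏ i, (k i).choose (c i)
    = (∏ i, (n i).choose (c i)) * ((∑ i, n i) - ∑ i, c i).choose (m - ∑ i, c i) := by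
  classical
  have step1 : ∑ k ∈ (Fintype.piFinset fun i => Finset.range (n i + 1)).filter
        (fun k => ∑ i, k i = m),
      (∏ i, (n i).choose (k i)) * ∏ i, (k i).choose (c i)
      = ∑ k ∈ ((Fintype.piFinset fun i => Finset.range (n i + 1)).filter
        (fun k => ∑ i, k i = m)).filter (fun k => ∀ i, c i ≤ k i),
      (∏ i, (n i).choose (k i)) * ∏ i, (k i).choose (c i) := by
    refine (Finset.sum_filter_of_ne ?_).symm
    intro k _ hne
    by_contra h
    push_neg at h
    obtain ⟨i, hi⟩ := h
    exact hne (by rw [show (∏ j, (k j).choose (c j)) = 0 from Finset.prod_eq_zero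
      (Finset.mem_univ i) (Nat.choose_eq_zero_of_lt hi), mul_zero])
  rw [step1, master_step2 s n c hc m hcm]
  simp_rw [Finset.prod_mul_distrib]
  rw [← Finset.mul_sum, vand, sum_sub_fin _ _ hc]

lemma sum_single {s : ℕ} (i : Fin s) (a : ℕ) :
    ∑ l, (if l = i then a else 0) = a := by
  rw [Finset.sum_ite_eq' Finset.univ i (fun _ => a)]
  simp

lemma prod_choose_single {s : ℕ} (i : Fin s) (g : Fin s → ℕ) (a : ℕ) :
    ∏ l, (g l).choose (if l = i then a else 0) = (g i).choose a := by
  rw [← Finset.mul_prod_erase Finset.univ _ (Finset.mem_univ i), if_pos rfl]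
  rw [Finset.prod_eq_one, mul_one]
  intro l hl
  rw [if_neg (Finset.mem_erase.1 hl).1, Nat.choose_zero_right]

lemma sum_pair {s : ℕ} (i j : Fin s) (hij : i ≠ j) (a b : ℕ) :
    ∑ l, (if l = i then a else if l = j then b else 0) = a + b := by
  have : ∀ l : Fin s, (if l = i then a else if l = j then b else 0)
      = (if l = i then a else 0) + (if l = j then b else 0) := by
    intro l
    by_cases h1 : l = i
    · subst h1; simp [hij]
    · rw [if_neg h1, if_neg h1]
      by_cases h2 : l = j <;> simp [h2]
  simp_rw [this]
  rw [Finset.sum_add_distrib, sum_single, sum_single]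

lemma prod_choose_pair {s : ℕ} (i j : Fin s) (hij : i ≠ j) (g : Fin s → ℕ) (a b : ℕ) :
    ∏ l, (g l).choose (if l = i then a else if l = j then b else 0)
      = (g i).choose a * (g j).choose b := by
  rw [← Finset.mul_prod_erase Finset.univ _ (Finset.mem_univ i), if_pos rfl]
  have hj : j ∈ Finset.univ.erase i := Finset.mem_erase.2 ⟨fun h => hij h.symm, Finset.mem_univ j⟩
  rw [← Finset.mul_prod_erase _ _ hj, if_neg (fun h => hij h.symm), if_pos rfl]
  rw [Finset.prod_eq_one, mul_one]
  intro l hl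
  obtain ⟨hlj, hli⟩ := Finset.mem_erase.1 hl
  rw [if_neg (Finset.mem_erase.1 hli).1, if_neg hlj, Nat.choose_zero_right]

lemma sq_choose (k : ℕ) : k * k = 2 * k.choose 2 + k := by
  induction k with
  | zero => rfl
  | succ t ih =>
    rw [Nat.choose_succ_succ, Nat.choose_one_right]
    nlinarith [ih]

lemma T_offdiag (s : ℕ) (n : Fin s → ℕ) (hn : ∀ l, 1 ≤ n l) (m : ℕ) (hm : 2 ≤ m)
    (i j : Fin s) (hij : i ≠ j) :
    ∑ k ∈ (Fintype.piFinset fun l => Finset.range (n l + 1)).filter (fun k => ∑ l, k l = m),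
      (∏ l, (n l).choose (k l)) * (k i * k j)
    = n i * n j * ((∑ l, n l) - 2).choose (m - 2) := by
  have hc : ∀ l, (if l = i then 1 else if l = j then 1 else 0) ≤ n l := by
    intro l; have := hn l; split_ifs <;> omega
  have := master s n (fun l => if l = i then 1 else if l = j then 1 else 0) hc m
    (by rw [sum_pair i j hij 1 1]; omega)
  rw [sum_pair i j hij 1 1] at this
  simp_rw [prod_choose_pair i j hij _ 1 1, Nat.choose_one_right] at this
  exact this

lemma T_single (s : ℕ) (n : Fin s → ℕ) (hn : ∀ l, 1 ≤ n l) (m : ℕ) (hm : 1 ≤ m) (i : Fin s) :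
    ∑ k ∈ (Fintype.piFinset fun l => Finset.range (n l + 1)).filter (fun k => ∑ l, k l = m),
      (∏ l, (n l).choose (k l)) * k i
    = n i * ((∑ l, n l) - 1).choose (m - 1) := by
  have hc : ∀ l, (if l = i then 1 else 0) ≤ n l := by
    intro l; have := hn l; split_ifs <;> omega
  have := master s n (fun l => if l = i then 1 else 0) hc m (by rw [sum_single i 1]; omega)
  rw [sum_single i 1] at this
  simp_rw [prod_choose_single i _ 1, Nat.choose_one_right] at this
  exact this

lemma T_two (s : ℕ) (n : Fin s → ℕ) (hn : ∀ l, 1 ≤ n l) (m : ℕ) (hm : 2 ≤ m) (i : Fin s) :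
    ∑ k ∈ (Fintype.piFinset fun l => Finset.range (n l + 1)).filter (fun k => ∑ l, k l = m),
      (∏ l, (n l).choose (k l)) * (k i).choose 2
    = (n i).choose 2 * ((∑ l, n l) - 2).choose (m - 2) := by
  by_cases h2 : 2 ≤ n i
  · have hc : ∀ l, (if l = i then 2 else 0) ≤ n l := by
      intro l; split_ifs with h
      · subst h; omega
      · omega
    have := master s n (fun l => if l = i then 2 else 0) hc m (by rw [sum_single i 2]; omega)
    rw [sum_single i 2] at this
    simp_rw [prod_choose_single i _ 2] at this
    exact this
  · rw [Nat.choose_eq_zero_of_lt (by omega), zero_mul]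
    apply Finset.sum_eq_zero
    intro k hk
    simp only [Finset.mem_filter, Fintype.mem_piFinset, Finset.mem_range] at hk
    have := hk.1 i
    rw [Nat.choose_eq_zero_of_lt (by omega), mul_zero]

lemma T_diag (s : ℕ) (n : Fin s → ℕ) (hn : ∀ l, 1 ≤ n l) (m : ℕ) (hm : 2 ≤ m)
    (hN : 2 ≤ ∑ l, n l) (i : Fin s) :
    ∑ k ∈ (Fintype.piFinset fun l => Finset.range (n l + 1)).filter (fun k => ∑ l, k l = m),
      (∏ l, (n l).choose (k l)) * (k i * k i)
    = n i * n i * ((∑ l, n l) - 2).choose (m - 2)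
      + n i * ((∑ l, n l) - 2).choose (m - 1) := by
  have e1 : (∑ l, n l) - 1 = ((∑ l, n l) - 2) + 1 := by omega
  have e2 : m - 1 = (m - 2) + 1 := by omega
  have hm1 : 1 ≤ m := Nat.le_of_succ_le hm
  have step : ∑ k ∈ (Fintype.piFinset fun l => Finset.range (n l + 1)).filter
        (fun k => ∑ l, k l = m), (∏ l, (n l).choose (k l)) * (k i * k i)
      = 2 * ∑ k ∈ (Fintype.piFinset fun l => Finset.range (n l + 1)).filter
          (fun k => ∑ l, k l = m), (∏ l, (n l).choose (k l)) * (k i).choose 2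
        + ∑ k ∈ (Fintype.piFinset fun l => Finset.range (n l + 1)).filter
          (fun k => ∑ l, k l = m), (∏ l, (n l).choose (k l)) * k i := by
    rw [Finset.mul_sum, ← Finset.sum_add_distrib]
    apply Finset.sum_congr rfl
    intro k _
    rw [sq_choose (k i)]
    ring
  rw [step, T_two s n hn m hm i, T_single s n hn m hm1 i]
  rw [e1, e2, Nat.choose_succ_succ, Nat.succ_eq_add_one, ← e2, sq_choose (n i)]
  ring

lemma expand {s : ℕ} (A : Finset (Fin s → ℕ)) (F : (Fin s → ℕ) → ℂ)
    (u v : Fin s → ℂ) (a1 a2 : ℂ) (nc : Fin s → ℂ)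
    (hT : ∀ i j, ∑ k ∈ A, F k * ((k i : ℂ) * (k j : ℂ)) =
      nc i * nc j * a2 + (if i = j then nc i * a1 else 0)) :
    ∑ k ∈ A, F k * ((∑ i, (k i : ℂ) * u i) * (∑ j, (k j : ℂ) * v j))
      = a1 * ∑ i, nc i * (u i * v i) + a2 * ((∑ i, nc i * u i) * (∑ j, nc j * v j)) := by
  have c0 : ∀ k, F k * ((∑ i, (k i : ℂ) * u i) * (∑ j, (k j : ℂ) * v j))
      = ∑ i, ∑ j, F k * ((k i : ℂ) * (k j : ℂ)) * (u i * v j) := by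
    intro k
    rw [Finset.sum_mul_sum, Finset.mul_sum]
    apply Finset.sum_congr rfl
    intro i _
    rw [Finset.mul_sum]
    apply Finset.sum_congr rfl
    intro j _
    ring
  calc ∑ k ∈ A, F k * ((∑ i, (k i : ℂ) * u i) * (∑ j, (k j : ℂ) * v j))
      = ∑ k ∈ A, ∑ i, ∑ j, F k * ((k i : ℂ) * (k j : ℂ)) * (u i * v j) :=
        Finset.sum_congr rfl (fun k _ => c0 k)
    _ = ∑ i, ∑ k ∈ A, ∑ j, F k * ((k i : ℂ) * (k j : ℂ)) * (u i * v j) := Finset.sum_comm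
    _ = ∑ i, ∑ j, ∑ k ∈ A, F k * ((k i : ℂ) * (k j : ℂ)) * (u i * v j) :=
        Finset.sum_congr rfl (fun i _ => Finset.sum_comm)
    _ = ∑ i, ∑ j, (nc i * nc j * a2 + (if i = j then nc i * a1 else 0)) * (u i * v j) := by
        apply Finset.sum_congr rfl
        intro i _
        apply Finset.sum_congr rfl
        intro j _
        rw [← Finset.sum_mul, hT]
    _ = ∑ i, (∑ j, (nc i * u i) * (nc j * v j) * a2 + nc i * a1 * (u i * v i)) := by
        apply Finset.sum_congr rfl
        intro i _
        simp_rw [add_mul]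
        rw [Finset.sum_add_distrib]
        congr 1
        · apply Finset.sum_congr rfl
          intro j _
          ring
        · simp only [ite_mul, zero_mul, Finset.sum_ite_eq, Finset.mem_univ, if_true]
    _ = a1 * ∑ i, nc i * (u i * v i) + a2 * ((∑ i, nc i * u i) * (∑ j, nc j * v j)) := by
        rw [Finset.sum_add_distrib, Finset.sum_mul_sum, Finset.mul_sum, Finset.mul_sum,
          add_comm]
        congr 1
        · apply Finset.sum_congr rfl
          intro i _
          ring
        · apply Finset.sum_congr rfl
          intro i _
          rw [Finset.mul_sum]
          apply Finset.sum_congr rfl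
          intro j _
          ring

theorem stmt_14 (s : ℕ) (hs : 2 ≤ s) (n : Fin s → ℕ) (hn : ∀ i, 1 ≤ n i)
    (z : Fin s → ℂ) (m : ℕ) (hm : 2 ≤ m) (hmn : m ≤ ∑ i, n i) :
    ∑ k ∈ Finset.filter (fun k : Fin s → ℕ => ∑ i, k i = m)
        (Fintype.piFinset fun i => Finset.range (n i + 1)),
      (∏ i, ((n i).choose (k i) : ℝ)) * ‖∑ i, (k i : ℂ) * z i‖ ^ 2
      = (((∑ i, n i) - 2).choose (m - 1) : ℝ) * (∑ i, (n i : ℝ) * ‖z i‖ ^ 2)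
        + (((∑ i, n i) - 2).choose (m - 2) : ℝ) * ‖∑ i, (n i : ℂ) * z i‖ ^ 2 := by
  classical
  have hN : 2 ≤ ∑ i, n i := by
    calc 2 ≤ s := hs
    _ = ∑ _i : Fin s, 1 := by simp
    _ ≤ ∑ i, n i := Finset.sum_le_sum (fun i _ => hn i)
  have hT : ∀ i j : Fin s,
      ∑ k ∈ Finset.filter (fun k : Fin s → ℕ => ∑ i, k i = m)
          (Fintype.piFinset fun i => Finset.range (n i + 1)),
        ((↑(∏ l, ((n l).choose (k l) : ℝ)) : ℂ)) * ((k i : ℂ) * (k j : ℂ))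
      = (n i : ℂ) * (n j : ℂ) * ((((∑ l, n l) - 2).choose (m - 2) : ℕ) : ℂ)
        + (if i = j then (n i : ℂ) * ((((∑ l, n l) - 2).choose (m - 1) : ℕ) : ℂ) else 0) := by
    intro i j
    by_cases hij : i = j
    · subst hij
      rw [if_pos rfl]
      have h := T_diag s n hn m hm hN i
      have h2 := congrArg (Nat.cast : ℕ → ℂ) h
      push_cast at h2 ⊢
      convert h2 using 2 <;> ring
    · rw [if_neg hij, add_zero]
      have h := T_offdiag s n hn m hm i j hij
      have h2 := congrArg (Nat.cast : ℕ → ℂ) h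
      push_cast at h2 ⊢
      convert h2 using 2 <;> ring
  have key := expand (Finset.filter (fun k : Fin s → ℕ => ∑ i, k i = m)
      (Fintype.piFinset fun i => Finset.range (n i + 1)))
    (fun k => ((∏ l, ((n l).choose (k l) : ℝ) : ℝ) : ℂ)) z (fun i => (starRingEnd ℂ) (z i))
    ((((∑ l, n l) - 2).choose (m - 1) : ℕ) : ℂ) ((((∑ l, n l) - 2).choose (m - 2) : ℕ) : ℂ)
    (fun i => (n i : ℂ)) hT
  have L : ((∑ k ∈ Finset.filter (fun k : Fin s → ℕ => ∑ i, k i = m)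
        (Fintype.piFinset fun i => Finset.range (n i + 1)),
      (∏ i, ((n i).choose (k i) : ℝ)) * ‖∑ i, (k i : ℂ) * z i‖ ^ 2 : ℝ) : ℂ)
      = ∑ k ∈ Finset.filter (fun k : Fin s → ℕ => ∑ i, k i = m)
          (Fintype.piFinset fun i => Finset.range (n i + 1)),
        ((∏ l, ((n l).choose (k l) : ℝ) : ℝ) : ℂ) *
          ((∑ i, (k i : ℂ) * z i) * (∑ j, (k j : ℂ) * (starRingEnd ℂ) (z j))) := by
    rw [Complex.ofReal_sum]
    apply Finset.sum_congr rfl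
    intro k _
    rw [Complex.ofReal_mul]
    congr 1
    rw [Complex.sq_norm, ← Complex.mul_conj]
    congr 1
    rw [map_sum]
    apply Finset.sum_congr rfl
    intro j _
    rw [map_mul, map_natCast]
  have R : (((((∑ i, n i) - 2).choose (m - 1) : ℝ) * (∑ i, (n i : ℝ) * ‖z i‖ ^ 2)
        + (((∑ i, n i) - 2).choose (m - 2) : ℝ) * ‖∑ i, (n i : ℂ) * z i‖ ^ 2 : ℝ) : ℂ)
      = ((((∑ l, n l) - 2).choose (m - 1) : ℕ) : ℂ) * ∑ i, (n i : ℂ) * (z i * (starRingEnd ℂ) (z i))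
        + ((((∑ l, n l) - 2).choose (m - 2) : ℕ) : ℂ) *
          ((∑ i, (n i : ℂ) * z i) * (∑ j, (n j : ℂ) * (starRingEnd ℂ) (z j))) := by
    push_cast
    congr 1
    · congr 1
      apply Finset.sum_congr rfl
      intro x _
      congr 1
      rw [← Complex.ofReal_pow, Complex.sq_norm, ← Complex.mul_conj]
    · congr 1
      rw [← Complex.ofReal_pow, Complex.sq_norm, ← Complex.mul_conj]
      congr 1
      rw [map_sum]
      apply Finset.sum_congr rfl
      intro j _
      rw [map_mul, map_natCast]
  apply Complex.ofReal_injective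
  rw [L, R]
  exact key
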